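/- arXiv:2510.22377 — 2 statements merged into one kernel-verified Lean document; each statement's English description precedes it below -/
import Mathlib

section
/- Let α ∈ (0,1) be irrational and let c_α be the characteristic word of slope α. Then there exist infinitely many n ≥ 0 such that for some coprime integers p, q ≥ 1 with p + q = n + 2, the finite word b·c_α(0)·c_α(1)···c_α(n−1)·a (the prefix of c_α of length n, preceded by the letter b and followed by the letter a) equals the Christoffel word C(p,q). In other words, a characteristic word admits an infinite sequence of prefixes w₁, w₂, … such that each b·wᵢ·a is a Christoffel word. -/
/-!
For `m ≥ 1`, `⌈m α⌉ / m` is a rational approximation of `α` from above, strictly so because `α`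
is irrational, and arbitrarily good ones exist since every rational `r > α` dominates one of
them. Hence there are arbitrarily large record denominators `N`, whose approximation beats all
smaller denominators. For such `N` and `R = ⌈N α⌉`, the slope `R / N` lies so close above `α`
that `⌈m R / N⌉ = ⌈m α⌉` for all `m ≤ N`, so the upper mechanical words of slopes `α` and `R / N`
share their first `N` letters. The first word is `b c_α`, the second begins with the Christoffel
word `C(N - R, R)`, and the record property forces `gcd(R, N) = 1`.
-/

namespace StringBricks

noncomputable def charWord (α : ℝ) : ℕ → Bool :=
  fun n => decide (⌊((n : ℝ) + 2) * α⌋ - ⌊((n : ℝ) + 1) * α⌋ = 1)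

/-- The prefix of length `n` of a right-infinite word. -/
def wordPrefix (w : ℕ → Bool) (n : ℕ) : List Bool :=
  (List.range n).map w

/-- The Christoffel word of slope `p/q` (for coprime `p, q ≥ 1`): the word of
length `p+q` whose `i`-th letter (`1 ≤ i ≤ p+q`, here `j = i - 1`) is
`a (= false)` if `⌊ip/(p+q)⌋ > ⌊(i−1)p/(p+q)⌋` and `b (= true)` otherwise. -/
def christoffel (p q : ℕ) : List Bool :=
  (List.range (p + q)).map fun j =>
    if j * p / (p + q) < (j + 1) * p / (p + q) then false else true

/-- The upper mechanical word `s'_{β,0}` of slope `β` (Lothaire), with `b = true`. -/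
noncomputable def upperMechanicalWord (β : ℝ) (n : ℕ) : Bool :=
  decide (⌈((n + 1 : ℕ) : ℝ) * β⌉ - ⌈(n : ℝ) * β⌉ = 1)

theorem upperMechanicalWord_zero {β : ℝ} (h0 : 0 < β) (h1 : β ≤ 1) :
    upperMechanicalWord β 0 = true := by
  have : ⌈β⌉ = 1 := Int.ceil_eq_iff.2 ⟨by norm_num [h0], by norm_num [h1]⟩
  simp [upperMechanicalWord, this]

theorem upperMechanicalWord_div_succ_self {R n : ℕ} (h : R < n + 1) :
    upperMechanicalWord ((R : ℝ) / (n + 1 : ℕ)) n = false := by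
  have hn : ((n + 1 : ℕ) : ℝ) ≠ 0 := by positivity
  have hfloor : ⌊(R : ℝ) / (n + 1 : ℕ)⌋ = 0 :=
    Int.floor_eq_zero_iff.2 ⟨by positivity, by rw [div_lt_one (by positivity)]; exact_mod_cast h⟩
  have hprev : ⌈(n : ℝ) * (R / (n + 1 : ℕ))⌉ = R := by
    rw [show (n : ℝ) * (R / (n + 1 : ℕ)) = (R : ℤ) + -((R : ℝ) / (n + 1 : ℕ)) by
      field_simp; push_cast; ring, Int.ceil_intCast_add, Int.ceil_neg, hfloor]
    simp
  simp only [upperMechanicalWord]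
  rw [mul_div_cancel₀ _ hn, hprev]
  simp

theorem natCast_mul_div_eq_sub_ceil (j : ℕ) {p q : ℕ} (hpq : 0 < p + q) :
    ((j * p / (p + q) : ℕ) : ℤ) = j - ⌈(j : ℝ) * (q / (p + q : ℕ))⌉ := by
  rw [← Nat.floor_div_eq_div (K := ℝ), Int.natCast_floor_eq_floor (by positivity)]
  have hN : ((p + q : ℕ) : ℝ) ≠ 0 := by positivity
  rw [show ((j * p : ℕ) : ℝ) / (p + q : ℕ) = (j : ℤ) + -((j : ℝ) * (q / (p + q : ℕ))) by
      field_simp; push_cast; ring,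
    Int.floor_intCast_add, Int.floor_neg, sub_eq_add_neg]

theorem christoffel_eq_map_upperMechanicalWord (p q : ℕ) :
    christoffel p q = (List.range (p + q)).map (upperMechanicalWord ((q : ℝ) / (p + q : ℕ))) := by
  refine List.map_congr_left fun j hj => ?_
  have hpq : 0 < p + q := Nat.zero_lt_of_lt (List.mem_range.1 hj)
  simp only [upperMechanicalWord, ← Nat.cast_lt (α := ℤ), natCast_mul_div_eq_sub_ceil j hpq,
    natCast_mul_div_eq_sub_ceil (j + 1) hpq]
  set β : ℝ := q / (p + q : ℕ)
  have hβ : 0 ≤ β ∧ β ≤ 1 :=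
    ⟨by positivity, div_le_one_of_le₀ (by push_cast; linarith) (by positivity)⟩
  have hmono : ⌈(j : ℝ) * β⌉ ≤ ⌈((j + 1 : ℕ) : ℝ) * β⌉ :=
    Int.ceil_le_ceil (by push_cast; nlinarith)
  have hstep : ⌈((j + 1 : ℕ) : ℝ) * β⌉ ≤ ⌈(j : ℝ) * β⌉ + 1 := by
    rw [← Int.ceil_add_one]
    exact Int.ceil_le_ceil (by push_cast; nlinarith)
  split_ifs <;>
    simp only [Bool.false_eq, Bool.true_eq, decide_eq_false_iff_not, decide_eq_true_eq] <;> omega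

theorem charWord_eq_upperMechanicalWord {α : ℝ} (hα : Irrational α) (n : ℕ) :
    charWord α n = upperMechanicalWord α (n + 1) := by
  have hceil : ∀ m : ℕ, m ≠ 0 → ⌈(m : ℝ) * α⌉ = ⌊(m : ℝ) * α⌋ + 1 := fun m hm =>
    (Int.ceil_eq_floor_add_one_iff_notMem _).2 fun ⟨z, hz⟩ => (hα.natCast_mul hm).ne_int z hz.symm
  rw [upperMechanicalWord, hceil _ (by omega), hceil _ (by omega), charWord]
  push_cast
  ring_nf

theorem cons_wordPrefix_append_eq_map_range {w f : ℕ → Bool} {a b : Bool} {n : ℕ}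
    (h0 : f 0 = a) (hw : ∀ j < n, w j = f (j + 1)) (hn : f (n + 1) = b) :
    a :: (wordPrefix w n ++ [b]) = (List.range (n + 2)).map f := by
  rw [List.range_succ, List.range_succ_eq_map, List.map_append, List.map_cons, List.map_map,
    wordPrefix, List.map_congr_left fun j hj => hw j (List.mem_range.1 hj)]
  simp [h0, hn]

def IsBestUpperApprox (α : ℝ) (N : ℕ) : Prop :=
  ∀ m : ℕ, 0 < m → m < N → (⌈(N : ℝ) * α⌉ : ℝ) / N < ⌈(m : ℝ) * α⌉ / m

section Approximation

variable {α : ℝ}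

theorem exists_ceil_mul_div_lt {x : ℝ} (h : α < x) :
    ∃ K : ℕ, 0 < K ∧ (⌈(K : ℝ) * α⌉ : ℝ) / K < x := by
  obtain ⟨r, hαr, hrx⟩ := exists_rat_btwn h
  have hden : (0 : ℝ) < r.den := by exact_mod_cast r.den_pos
  have hnum : (r.num : ℝ) = r * r.den := by exact_mod_cast (Rat.mul_den_eq_num r).symm
  have hceil : ⌈(r.den : ℝ) * α⌉ ≤ r.num := Int.ceil_le.2 (by rw [hnum]; nlinarith)
  refine ⟨r.den, r.den_pos, lt_of_le_of_lt ?_ hrx⟩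
  rw [div_le_iff₀ hden, ← hnum]
  exact_mod_cast hceil

theorem _root_.Irrational.lt_ceil_natCast_mul_div (hα : Irrational α) {m : ℕ} (hm : 0 < m) :
    α < ⌈(m : ℝ) * α⌉ / m := by
  rw [lt_div_iff₀ (by exact_mod_cast hm), mul_comm]
  exact (Int.le_ceil _).lt_of_ne ((hα.natCast_mul hm.ne').ne_int _)

theorem exists_isBestUpperApprox_gt (hα : Irrational α) (M : ℕ) :
    ∃ N, M < N ∧ IsBestUpperApprox α N := by
  classical
  let u : ℕ → ℝ := fun m => ⌈(m : ℝ) * α⌉ / m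
  have hne : (Finset.Icc 1 (M + 1)).Nonempty := ⟨1, by simp⟩
  have hαc : α < (Finset.Icc 1 (M + 1)).inf' hne u :=
    (Finset.lt_inf'_iff _).2 fun m hm => hα.lt_ceil_natCast_mul_div (Finset.mem_Icc.1 hm).1
  have hex : ∃ K, 0 < K ∧ u K < (Finset.Icc 1 (M + 1)).inf' hne u := exists_ceil_mul_div_lt hαc
  obtain ⟨hpos, hlt⟩ := Nat.find_spec hex
  refine ⟨Nat.find hex, ?_, fun m hm hmN => hlt.trans_le ?_⟩
  · by_contra! hle
    exact hlt.not_ge (Finset.inf'_le u (Finset.mem_Icc.2 ⟨hpos, by omega⟩))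
  · exact not_lt.1 fun h => Nat.find_min hex hmN ⟨hm, h⟩

theorem IsBestUpperApprox.ceil_mul_div_eq {N R m : ℕ} (hN : IsBestUpperApprox α N)
    (hR : ⌈(N : ℝ) * α⌉ = R) (hm : m ≤ N) :
    ⌈(m : ℝ) * (R / N)⌉ = ⌈(m : ℝ) * α⌉ := by
  rcases hm.lt_or_eq with hm | rfl
  · have hN0 : (0 : ℝ) < N := by exact_mod_cast (Nat.zero_le m).trans_lt hm
    refine le_antisymm ?_ (Int.ceil_le_ceil ?_)
    · rcases Nat.eq_zero_or_pos m with rfl | hm0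
      · simp
      have hbest := hN m hm0 hm
      rw [hR, Int.cast_natCast, lt_div_iff₀ (by exact_mod_cast hm0)] at hbest
      exact Int.ceil_le.2 (by linarith)
    · have hNR := Int.le_ceil ((N : ℝ) * α)
      rw [hR, Int.cast_natCast] at hNR
      have : α ≤ R / N := by rw [le_div_iff₀ hN0]; linarith
      exact mul_le_mul_of_nonneg_left this (Nat.cast_nonneg m)
  · rcases Nat.eq_zero_or_pos m with rfl | hm0
    · simp
    rw [mul_div_cancel₀ _ (by positivity), hR, Int.ceil_natCast]

theorem IsBestUpperApprox.coprime {N R : ℕ} (hN : IsBestUpperApprox α N)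
    (hR : ⌈(N : ℝ) * α⌉ = R) (hpos : 0 < N) : R.Coprime N := by
  obtain ⟨R', N', -, hR', hN'⟩ := Nat.exists_coprime R N
  have hd : 0 < R.gcd N := Nat.gcd_pos_of_pos_right _ hpos
  rw [Nat.Coprime]
  generalize R.gcd N = d at hR' hN' hd ⊢
  subst hR' hN'
  rcases Nat.eq_or_lt_of_le (Nat.le_of_dvd hpos (Dvd.intro _ rfl) : N' ≤ N' * d) with heq | hlt
  · exact (Nat.mul_eq_left (by omega)).1 heq.symm
  exfalso
  have hN'0 : 0 < N' := Nat.pos_of_mul_pos_right hpos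
  have hdR : (0 : ℝ) < d := by exact_mod_cast hd
  have hNR := Int.le_ceil ((↑(N' * d) : ℝ) * α)
  rw [hR] at hNR
  push_cast at hNR
  have hceil : ⌈(N' : ℝ) * α⌉ ≤ R' := Int.ceil_le.2 <| by
    rw [Int.cast_natCast]; exact le_of_mul_le_mul_right (by linarith) hdR
  have hbest := hN N' hN'0 hlt
  rw [hR, Int.cast_natCast, Nat.cast_mul, Nat.cast_mul, mul_div_mul_right _ _ hdR.ne'] at hbest
  exact hbest.not_ge (div_le_div_of_nonneg_right (by exact_mod_cast hceil) (by positivity))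

theorem IsBestUpperApprox.ceil_lt {N : ℕ} (hN : IsBestUpperApprox α N) (hα : α ≤ 1)
    (h1 : 1 < N) : ⌈(N : ℝ) * α⌉ < N := by
  have hbest := hN 1 one_pos h1
  have hceil : ⌈(1 : ℕ) * α⌉ ≤ 1 := Int.ceil_le.2 (by simpa using hα)
  have : (⌈(N : ℝ) * α⌉ : ℝ) / N < 1 :=
    hbest.trans_le (by simpa using (Int.cast_le (R := ℝ)).2 hceil)
  rw [div_lt_one (by positivity)] at this
  exact_mod_cast this

end Approximation

theorem characteristic_has_infinitely_many_christoffel_prefixes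
    (α : ℝ) (hirr : Irrational α) (h0 : 0 < α) (h1 : α < 1) :
    ∀ N : ℕ, ∃ n : ℕ, N ≤ n ∧ ∃ p q : ℕ, 1 ≤ p ∧ 1 ≤ q ∧ Nat.Coprime p q ∧
      p + q = n + 2 ∧
      true :: (wordPrefix (charWord α) n ++ [false]) = christoffel p q := by
  intro M
  obtain ⟨N, hMN, hN⟩ := exists_isBestUpperApprox_gt hirr (M + 1)
  obtain ⟨n, rfl⟩ : ∃ n, N = n + 2 := ⟨N - 2, by omega⟩
  obtain ⟨R, hR⟩ : ∃ R : ℕ, ⌈((n + 2 : ℕ) : ℝ) * α⌉ = R :=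
    Int.eq_ofNat_of_zero_le (Int.ceil_nonneg (by positivity))
  have hR0 : 0 < R := by
    have := Int.ceil_pos.2 (show 0 < ((n + 2 : ℕ) : ℝ) * α by positivity)
    omega
  have hRN : R < n + 2 := by have := hN.ceil_lt h1.le (by omega); omega
  refine ⟨n, by omega, n + 2 - R, R, by omega, hR0,
    (Nat.coprime_sub_self_left hRN.le).2 (hN.coprime hR (by omega)).symm, by omega, ?_⟩
  rw [christoffel_eq_map_upperMechanicalWord, Nat.sub_add_cancel hRN.le]
  refine cons_wordPrefix_append_eq_map_range (upperMechanicalWord_zero (by positivity) ?_)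
    (fun j hj => ?_) (upperMechanicalWord_div_succ_self hRN)
  · rw [div_le_one (by positivity)]; exact_mod_cast hRN.le
  · rw [charWord_eq_upperMechanicalWord hirr, upperMechanicalWord, upperMechanicalWord,
      hN.ceil_mul_div_eq hR (by omega), hN.ceil_mul_div_eq hR (by omega)]

end StringBricks
end

section
/- Let p, q ≥ 1 be coprime integers. Then the Christoffel word C(p,q) begins with the letter b and ends with the letter a, and writing C(p,q) = b·u·a with u the middle word of length p+q−2, there exists a right-infinite Sturmian word w : ℕ → {a,b} having u as a prefix. -/
/-!
STATEMENT 13: For coprime `p, q ≥ 1`, the Christoffel word `C(p,q)` begins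
with `b = true` and ends with `a = false`, and writing `C(p,q) = b·u·a` there
is a right-infinite Sturmian word having `u` as a prefix.
-/

namespace StringBricks

def IsFactor (w : ℕ → Bool) (u : List Bool) : Prop :=
  ∃ i : ℕ, ∀ j : Fin u.length, w (i + j) = u.get j

def BalancedWord (w : ℕ → Bool) : Prop :=
  ∀ u v : List Bool, IsFactor w u → IsFactor w v → u.length = v.length →
    |(u.count true : ℤ) - (v.count true : ℤ)| ≤ 1

def EventuallyPeriodic (w : ℕ → Bool) : Prop :=
  ∃ N p : ℕ, 1 ≤ p ∧ ∀ n : ℕ, N ≤ n → w (n + p) = w n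

def SturmianWord (w : ℕ → Bool) : Prop :=
  BalancedWord w ∧ ¬ EventuallyPeriodic w

/-- `u` is a prefix of the right-infinite word `w`. -/
def IsPrefixOf (u : List Bool) (w : ℕ → Bool) : Prop :=
  ∀ j : Fin u.length, w j = u.get j

/-
Take an irrational `α` slightly above `p / (p + q)`, so that `⌊k α⌋ = ⌊k p / (p + q)⌋` for all
`k ≤ p + q`. Then `C(p,q)` is a prefix of the word coding the steps of `n ↦ ⌊n α⌋`, and `u` is a
prefix of its shift, the mechanical word with intercept `α`. Such a word is balanced since a
window of length `L` contains `⌊L α⌋` or `⌊L α⌋ + 1` steps, and it is aperiodic since a period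
`P` would force `P α ∈ ℤ`.
-/

def stepWord {β : Type*} [LT β] [DecidableLT β] (f : ℕ → β) (n : ℕ) : Bool :=
  if f n < f (n + 1) then false else true

def window (w : ℕ → Bool) (i L : ℕ) : List Bool :=
  (List.range L).map fun j => w (i + j)

/-- Coding the steps of `⌊n α + ρ⌋` by `a = false`, as `christoffel` does, exchanges the letters
of the usual lower mechanical word of slope `α` and intercept `ρ`. -/
noncomputable def mechanicalWord (α ρ : ℝ) : ℕ → Bool :=
  stepWord fun n => ⌊n * α + ρ⌋

theorem IsFactor.exists_eq_window {w : ℕ → Bool} {u : List Bool} (hu : IsFactor w u) :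
    ∃ i, u = window w i u.length := by
  obtain ⟨i, hi⟩ := hu
  refine ⟨i, List.ext_getElem (by simp [window]) fun j hj _ => ?_⟩
  simpa [window] using (hi ⟨j, hj⟩).symm

theorem IsPrefixOf.of_cons {a : Bool} {u : List Bool} {w : ℕ → Bool} (h : IsPrefixOf (a :: u) w) :
    IsPrefixOf u fun n => w (n + 1) :=
  fun j => h j.succ

theorem IsPrefixOf.of_append {u v : List Bool} {w : ℕ → Bool} (h : IsPrefixOf (u ++ v) w) :
    IsPrefixOf u w := fun j => by
  simpa [List.getElem_append_left j.2] using h ⟨j, by simp; omega⟩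

section StepWord

variable {f : ℕ → ℤ} (hf : ∀ n, f n ≤ f (n + 1) ∧ f (n + 1) ≤ f n + 1)
include hf

theorem succ_eq_add_ite_stepWord (n : ℕ) : f (n + 1) = f n + if stepWord f n then 0 else 1 := by
  have := hf n
  by_cases h : f n < f (n + 1) <;> simp [stepWord, h] <;> omega

theorem count_window_stepWord (i L : ℕ) :
    ((window (stepWord f) i L).count true : ℤ) = L - (f (i + L) - f i) := by
  induction L with
  | zero => simp [window]
  | succ L ih =>
    have hstep := succ_eq_add_ite_stepWord hf (i + L)
    rw [window, List.range_succ, List.map_append, List.count_append, ← window, ← add_assoc]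
    push_cast
    rw [ih]
    cases hw : stepWord f (i + L) <;> simp [hw] at hstep ⊢ <;> omega

theorem eq_add_mul_of_stepWord_periodic {N P : ℕ}
    (hper : ∀ n, N ≤ n → stepWord f (n + P) = stepWord f n) (k : ℕ) :
    f (N + k * P) = f N + k * (f (N + P) - f N) := by
  have hconst : ∀ n, N ≤ n → f (n + P) - f n = f (N + P) - f N := by
    intro n hn
    induction n, hn using Nat.le_induction with
    | base => rfl
    | succ n hn ih =>
      have h₁ := succ_eq_add_ite_stepWord hf (n + P)
      have h₂ := succ_eq_add_ite_stepWord hf n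
      rw [hper n hn, Nat.add_right_comm] at h₁
      omega
  induction k with
  | zero => simp
  | succ k ih =>
    have := hconst (N + k * P) (by omega)
    rw [Nat.succ_mul, ← add_assoc]
    push_cast
    linarith

end StepWord

theorem floor_add_sub_floor_mem_Icc (x y : ℝ) : ⌊x + y⌋ - ⌊x⌋ ∈ Set.Icc ⌊y⌋ (⌊y⌋ + 1) := by
  have := Int.le_floor_add x y
  have := Int.le_floor_add_floor x y
  constructor <;> omega

/-- The fractional parts of `x` and `x + k y` differ by `k (y - c)`, which must therefore stay
in `(-1, 1)` for every `k`. -/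
theorem eq_of_forall_floor_add_nat_mul {x y : ℝ} {c : ℤ}
    (h : ∀ k : ℕ, ⌊x + k * y⌋ = ⌊x⌋ + k * c) : y = c := by
  have hsmall : ∀ k : ℕ, k * |y - c| < 1 := fun k => by
    have hfract : Int.fract (x + k * y) = Int.fract x + k * (y - c) := by
      rw [← Int.self_sub_floor, ← Int.self_sub_floor, h k]
      push_cast
      ring
    have := Int.fract_nonneg (x + k * y)
    have := Int.fract_lt_one (x + k * y)
    have := Int.fract_nonneg x
    have := Int.fract_lt_one x
    rw [← abs_of_nonneg (Nat.cast_nonneg (α := ℝ) k), ← abs_mul, abs_lt]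
    constructor <;> linarith
  by_contra hne
  have hpos : 0 < |y - c| := abs_pos.mpr (sub_ne_zero.mpr hne)
  obtain ⟨k, hk⟩ := exists_nat_gt (1 / |y - c|)
  rw [div_lt_iff₀ hpos] at hk
  exact (hsmall k).not_gt hk

section Mechanical

variable {α : ℝ} (h0 : 0 ≤ α) (h1 : α ≤ 1)
include h0 h1

theorem floor_mul_add_step_bounds (ρ : ℝ) (n : ℕ) :
    ⌊n * α + ρ⌋ ≤ ⌊(n + 1 : ℕ) * α + ρ⌋ ∧ ⌊(n + 1 : ℕ) * α + ρ⌋ ≤ ⌊n * α + ρ⌋ + 1 := by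
  have hsucc : ((n + 1 : ℕ) : ℝ) * α + ρ = n * α + ρ + α := by push_cast; ring
  rw [hsucc, ← Int.floor_add_one]
  exact ⟨Int.floor_le_floor (by linarith), Int.floor_le_floor (by linarith)⟩

theorem count_window_mechanicalWord (ρ : ℝ) (i L : ℕ) :
    L - ⌊L * α⌋ - 1 ≤ ((window (mechanicalWord α ρ) i L).count true : ℤ) ∧
      ((window (mechanicalWord α ρ) i L).count true : ℤ) ≤ L - ⌊L * α⌋ := by
  rw [mechanicalWord, count_window_stepWord (floor_mul_add_step_bounds h0 h1 ρ)]
  have hsplit : ((i + L : ℕ) : ℝ) * α + ρ = (i * α + ρ) + L * α := by push_cast; ring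
  obtain ⟨hlow, hhigh⟩ := floor_add_sub_floor_mem_Icc (i * α + ρ) (L * α)
  rw [hsplit]
  omega

theorem balancedWord_mechanicalWord (ρ : ℝ) : BalancedWord (mechanicalWord α ρ) := by
  rintro u v hu hv hlen
  obtain ⟨i, hi⟩ := hu.exists_eq_window
  obtain ⟨j, hj⟩ := hv.exists_eq_window
  have hcu := count_window_mechanicalWord h0 h1 ρ i u.length
  have hcv := count_window_mechanicalWord h0 h1 ρ j v.length
  rw [← hi, hlen] at hcu
  rw [← hj] at hcv
  rw [abs_le]
  omega

theorem not_eventuallyPeriodic_mechanicalWord (hα : Irrational α) (ρ : ℝ) :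
    ¬ EventuallyPeriodic (mechanicalWord α ρ) := by
  rintro ⟨N, P, hP, hper⟩
  have hlin := eq_add_mul_of_stepWord_periodic (floor_mul_add_step_bounds h0 h1 ρ) hper
  have hslope : (P * α : ℝ) = ((⌊((N + P : ℕ) : ℝ) * α + ρ⌋ - ⌊(N : ℝ) * α + ρ⌋ : ℤ) : ℝ) := by
    refine eq_of_forall_floor_add_nat_mul (x := N * α + ρ) fun k => ?_
    have hsplit : ((N + k * P : ℕ) : ℝ) * α + ρ = N * α + ρ + k * (P * α) := by push_cast; ring
    rw [← hsplit, hlin k]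
  exact (hα.natCast_mul (by omega)).ne_int _ hslope

theorem sturmianWord_mechanicalWord (hα : Irrational α) (ρ : ℝ) :
    SturmianWord (mechanicalWord α ρ) :=
  ⟨balancedWord_mechanicalWord h0 h1 ρ, not_eventuallyPeriodic_mechanicalWord h0 h1 hα ρ⟩

end Mechanical

theorem mechanicalWord_succ (α ρ : ℝ) (n : ℕ) :
    mechanicalWord α ρ (n + 1) = mechanicalWord α (ρ + α) n := by
  simp only [mechanicalWord, stepWord]
  push_cast
  ring_nf

/-- For `k ≤ n` the fractional part of `k p / n` is at most `1 - 1/n`, and moving the slope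
from `p / n` to `α` adds less than `k / n² ≤ 1 / n`. -/
theorem floor_nat_mul_eq_div {n p k : ℕ} {α : ℝ} (hk : k ≤ n) (hlo : (p : ℝ) / n ≤ α)
    (hhi : α < (p + 1 / n) / n) : ⌊(k : ℝ) * α⌋ = (k * p / n : ℕ) := by
  have hn : 0 < n := by
    rcases Nat.eq_zero_or_pos n with rfl | hn
    · simp at hlo hhi; linarith
    · exact hn
  have hnR : (0 : ℝ) < n := by exact_mod_cast hn
  have hdiv : k * p + 1 ≤ n * (k * p / n + 1) := Nat.lt_mul_div_succ _ hn
  have hdivR : (k : ℝ) * p + 1 ≤ n * ((k * p / n : ℕ) + 1) := by exact_mod_cast hdiv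
  rw [Int.floor_eq_iff, Int.cast_natCast]
  constructor
  · calc ((k * p / n : ℕ) : ℝ) ≤ (k * p : ℕ) / n := Nat.cast_div_le
      _ = k * (p / n) := by push_cast; ring
      _ ≤ k * α := by gcongr
  · rcases Nat.eq_zero_or_pos k with rfl | hk0
    · simp
    have hkR : (0 : ℝ) < k := by exact_mod_cast hk0
    have hknR : (k : ℝ) ≤ n := by exact_mod_cast hk
    rw [lt_div_iff₀ hnR] at hhi
    rw [← mul_lt_mul_iff_right₀ hnR]
    calc n * (k * α) = k * (α * n) := by ring
      _ < k * (p + 1 / n) := by gcongr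
      _ = k * p + k / n := by ring
      _ ≤ k * p + 1 := by gcongr; exact (div_le_one hnR).mpr hknR
      _ ≤ _ := hdivR

theorem christoffel_isPrefixOf_mechanicalWord {p q : ℕ} {α : ℝ} (hlo : (p : ℝ) / (p + q) ≤ α)
    (hhi : α < (p + 1 / (p + q)) / (p + q)) :
    IsPrefixOf (christoffel p q) (mechanicalWord α 0) := by
  have hfloor : ∀ k ≤ p + q, ⌊(k : ℝ) * α⌋ = (k * p / (p + q) : ℕ) := fun k hk =>
    floor_nat_mul_eq_div hk (by push_cast; exact hlo) (by push_cast; exact hhi)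
  rintro ⟨j, hj⟩
  have hj' : j < p + q := by simpa [christoffel] using hj
  simp only [mechanicalWord, stepWord, christoffel, add_zero, List.get_eq_getElem,
    List.getElem_map, List.getElem_range, hfloor j hj'.le, hfloor (j + 1) hj', Nat.cast_lt]

theorem List.exists_eq_cons_append_singleton {β : Type*} {l : List β} (h : 2 ≤ l.length) :
    ∃ u, l = l[0] :: (u ++ [l[l.length - 1]]) := by
  obtain ⟨a, t, rfl⟩ := List.exists_cons_of_length_pos (by omega : 0 < l.length)
  have ht : t ≠ [] := by rintro rfl; simp at h
  refine ⟨t.dropLast, ?_⟩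
  have hlast : (a :: t)[t.length] = t.getLast ht := by
    simp [List.getElem_cons, List.getLast_eq_getElem, List.length_pos_iff.mpr ht |>.ne']
  simpa [hlast] using (List.dropLast_append_getLast ht).symm

theorem christoffel_eq_cons_append {p q : ℕ} (hp : 1 ≤ p) (hq : 1 ≤ q) :
    ∃ u, christoffel p q = true :: (u ++ [false]) := by
  have hlen : (christoffel p q).length = p + q := by simp [christoffel]
  obtain ⟨u, hu⟩ := List.exists_eq_cons_append_singleton (l := christoffel p q) (by omega)
  refine ⟨u, hu.trans ?_⟩
  have hfirst : p / (p + q) = 0 := Nat.div_eq_of_lt (by omega)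
  have hlast : (p + q - 1) * p / (p + q) < (p + q - 1 + 1) * p / (p + q) := by
    rw [Nat.sub_add_cancel (by omega), Nat.mul_div_cancel_left _ (by omega),
      Nat.div_lt_iff_lt_mul (by omega), Nat.mul_comm p]
    exact Nat.mul_lt_mul_of_pos_right (by omega) (by omega)
  simp [christoffel, hfirst, hlast]

theorem christoffel_middle_prefix_of_sturmian_general (p q : ℕ)
    (hp : 1 ≤ p) (hq : 1 ≤ q) :
    ∃ u : List Bool, christoffel p q = true :: (u ++ [false]) ∧
      ∃ w : ℕ → Bool, SturmianWord w ∧ IsPrefixOf u w := by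
  obtain ⟨u, hu⟩ := christoffel_eq_cons_append hp hq
  have hn : (1 : ℝ) ≤ p + q := by norm_cast; omega
  have hq1 : (1 : ℝ) ≤ q := by exact_mod_cast hq
  obtain ⟨α, hα, hlo, hhi⟩ := exists_irrational_btwn (x := p / (p + q))
    (y := (p + 1 / (p + q)) / (p + q)) (by gcongr; simp; linarith)
  have h0 : 0 ≤ α := le_trans (by positivity) hlo.le
  have h1 : α ≤ 1 := by
    refine hhi.le.trans ((div_le_one (by positivity)).mpr ?_)
    linarith [(div_le_one (by positivity : (0 : ℝ) < p + q)).mpr hn]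
  have hprefix := christoffel_isPrefixOf_mechanicalWord hlo.le hhi
  rw [hu] at hprefix
  refine ⟨u, hu, mechanicalWord α α, sturmianWord_mechanicalWord h0 h1 hα α, ?_⟩
  simpa [mechanicalWord_succ] using hprefix.of_cons.of_append

theorem christoffel_middle_prefix_of_sturmian (p q : ℕ)
    (hp : 1 ≤ p) (hq : 1 ≤ q) (hco : Nat.Coprime p q) :
    ∃ u : List Bool, christoffel p q = true :: (u ++ [false]) ∧
      ∃ w : ℕ → Bool, SturmianWord w ∧ IsPrefixOf u w :=
  christoffel_middle_prefix_of_sturmian_general p q hp hq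

end StringBricks
end
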